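/- Let F ∈ H_Z satisfy M̃(F) = F and p₂(F) ≡ 1 a.e. on 𝕋. Set m₁(z) = z·conj(m₀(−z)), (S₁f)(z) = m₁(z)f(z²), L₀ = S₁(L²(𝕋)) (which equals ker S₀*), V₀(F) = the closure of {π_Z(α)F : α ∈ L²(𝕋)} in H_Z, Vₙ(F) = Ũⁿ(V₀(F)), and Wₙ(F) = Vₙ(F) ⊖ V_{n+1}(F). Then V_{n+1}(F) ⊆ Vₙ(F), C_F(S₀ⁿ L²(𝕋)) = Vₙ(F), and C_F(S₀ⁿ L₀) = Wₙ(F) for all n ≥ 0; moreover C_F is isometric. -/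

import Mathlib

/-!
Since `p₂(F) = 1`, Tonelli gives `‖αF‖ = ‖α‖`, so `C_F` is an isometry and `V₀(F)` is its
(closed) range. As `Ũ(αF)(z, x) = α(z²) (ŨF)(z, x)` and the fixed-point equation reads
`ŨF = m₀F`, we get `Ũ C_F = C_F S₀`, hence `Vₙ(F) = C_F(S₀ⁿ L²(𝕋))`. The quadrature condition
makes `(m₀(z), m₁(z); m₀(-z), m₁(-z))` a multiple of a unitary matrix, so `L²(𝕋)` is the
orthogonal sum `S₀L²(𝕋) ⊕ S₁L²(𝕋)`; transporting it by the isometries `C_F` and `Ũⁿ` yields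
`Wₙ(F) = C_F(S₀ⁿ L₀)`.
-/

open MeasureTheory Complex Real Filter Topology

noncomputable section

/-- The normalized Haar measure `μ` of the circle `𝕋`, realized on the fundamental
domain `(0, 2π]` of `ℝ` via the identification `z = e^{-iω}`. -/
def muT : Measure ℝ := (ENNReal.ofReal (2 * π))⁻¹ • (volume.restrict (Set.Ioc 0 (2 * π)))

/-- The measure on `𝕋 × [0,1]` underlying the Hilbert space `H_Z` (Zak-transform side). -/
def muZ : Measure (ℝ × ℝ) := muT.prod (volume.restrict (Set.Ioc 0 1))

/-- `L²(𝕋)`. -/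
abbrev L2T : Type := MeasureTheory.Lp ℂ 2 muT

/-- The Hilbert space `H_Z ≃ L²(𝕋 × [0,1])`, the range of the Zak transform. -/
abbrev HZ : Type := MeasureTheory.Lp ℂ 2 muZ

/-- Quasi-periodicity characterizing membership of a function in `H_Z`:
`2π`-periodicity in the `ω`-coordinate and `H(z, x + n) = z^{-n} H(z, x)`,
i.e. `H(ω, x + n) = e^{inω} H(ω, x)`. -/
def QP (H : ℝ × ℝ → ℂ) : Prop :=
  (∀ ω x : ℝ, H (ω + 2 * π, x) = H (ω, x)) ∧
    ∀ (ω x : ℝ) (n : ℤ),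
      H (ω, x + (n : ℝ)) = Complex.exp (Complex.I * (n : ℂ) * (ω : ℂ)) * H (ω, x)

/-- `T = π_Z(m)`, multiplication by `m(z)` on `H_Z`. -/
def IsMulOp (m : ℝ → ℂ) (T : HZ →L[ℂ] HZ) : Prop :=
  ∀ H : HZ, ⇑(T H) =ᵐ[muZ] fun p : ℝ × ℝ => m p.1 * (⇑H) p

/-- `Ut` is the unitary `Ũ` on `H_Z`:
`(ŨH)(z,x) = 2^{-1/2} (H(z², x/2) + z·H(z², (x+1)/2))`, characterized on quasi-periodic
representatives (`z = e^{-iω}`). -/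
def IsUt (Ut : HZ ≃ₗᵢ[ℂ] HZ) : Prop :=
  ∀ H : ℝ × ℝ → ℂ, Measurable H → QP H →
    ∀ hH : MeasureTheory.MemLp H 2 muZ,
      ⇑(Ut (hH.toLp H)) =ᵐ[muZ] fun p : ℝ × ℝ =>
        ((Real.sqrt 2 : ℝ) : ℂ)⁻¹ *
          (H (2 * p.1, p.2 / 2) +
            Complex.exp (-(Complex.I * (p.1 : ℂ))) * H (2 * p.1, (p.2 + 1) / 2))

/-- `S` is the operator `(Sf)(z) = m(z) f(z²)` on `L²(𝕋)`, characterized on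
`2π`-periodic representatives. -/
def IsSOp (m : ℝ → ℂ) (S : L2T →L[ℂ] L2T) : Prop :=
  ∀ f : ℝ → ℂ, Measurable f → (∀ ω, f (ω + 2 * π) = f ω) →
    ∀ hf : MeasureTheory.MemLp f 2 muT,
      ⇑(S (hf.toLp f)) =ᵐ[muT] fun ω : ℝ => m ω * f (2 * ω)

open Set Function
open scoped InnerProductSpace ENNReal

section Ladder

variable {E H : Type*} [NormedAddCommGroup E] [InnerProductSpace ℂ E]
  [NormedAddCommGroup H] [InnerProductSpace ℂ H]

theorem LinearIsometry.image_setOf_inner_eq_zero (U : H →ₗᵢ[ℂ] H) (A B : Set H) :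
    U '' {v ∈ A | ∀ w ∈ B, ⟪w, v⟫_ℂ = 0} = {v ∈ U '' A | ∀ w ∈ U '' B, ⟪w, v⟫_ℂ = 0} := by
  ext v
  constructor
  · rintro ⟨u, ⟨hu, hperp⟩, rfl⟩
    refine ⟨mem_image_of_mem U hu, ?_⟩
    rintro _ ⟨w, hw, rfl⟩
    rw [U.inner_map_map, hperp w hw]
  · rintro ⟨⟨u, hu, rfl⟩, hperp⟩
    refine ⟨u, ⟨hu, fun w hw => ?_⟩, rfl⟩
    rw [← U.inner_map_map]
    exact hperp (U w) (mem_image_of_mem U hw)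

variable (C : E →ₗᵢ[ℂ] H) (U : H →ₗᵢ[ℂ] H) {S₀ S₁ : E →L[ℂ] E}

theorem image_pow_image_eq_iterate_image (h : Semiconj C S₀ U) (n : ℕ) (s : Set E) :
    C '' ((S₀ ^ n) '' s) = U^[n] '' (C '' s) := by
  rw [image_image, image_image, FunLike.coe_pow_eq_iterate]
  exact image_congr fun a _ => h.iterate_right n a

theorem image_range_eq_setOf_inner_eq_zero (h : Semiconj C S₀ U)
    (horth : ∀ a b, ⟪S₀ a, S₁ b⟫_ℂ = 0) (hspan : ∀ f, ∃ g k, f = S₀ g + S₁ k) :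
    C '' range S₁ = {v ∈ range C | ∀ w ∈ U '' range C, ⟪w, v⟫_ℂ = 0} := by
  ext v
  constructor
  · rintro ⟨_, ⟨b, rfl⟩, rfl⟩
    refine ⟨mem_range_self _, ?_⟩
    rintro _ ⟨_, ⟨a, rfl⟩, rfl⟩
    rw [← h a, C.inner_map_map, horth]
  · rintro ⟨⟨f, rfl⟩, hperp⟩
    obtain ⟨g, k, rfl⟩ := hspan f
    have hg : S₀ g = 0 := by
      have := hperp (U (C g)) (mem_image_of_mem U (mem_range_self g))
      rwa [← h g, C.inner_map_map, inner_add_right, horth, add_zero, inner_self_eq_zero] at this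
    exact ⟨S₁ k, mem_range_self k, by rw [hg, zero_add]⟩

theorem multiresolution_ladder [CompleteSpace E] (h : Semiconj C S₀ U)
    (horth : ∀ a b, ⟪S₀ a, S₁ b⟫_ℂ = 0) (hspan : ∀ f, ∃ g k, f = S₀ g + S₁ k) :
    (∀ n : ℕ, U^[n + 1] '' closure (range C) ⊆ U^[n] '' closure (range C)) ∧
    (∀ n : ℕ, C '' range (S₀ ^ n) = U^[n] '' closure (range C)) ∧
    (∀ n : ℕ, C '' ((S₀ ^ n) '' range S₁) =
      {v ∈ U^[n] '' closure (range C) | ∀ w ∈ U^[n + 1] '' closure (range C), ⟪w, v⟫_ℂ = 0}) := by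
  rw [C.isometry.isClosedEmbedding.isClosed_range.closure_eq]
  have hU : U '' range C ⊆ range C := by
    rintro _ ⟨_, ⟨a, rfl⟩, rfl⟩
    exact ⟨S₀ a, h a⟩
  refine ⟨fun n => ?_, fun n => ?_, fun n => ?_⟩
  · rw [iterate_succ, image_comp]
    exact image_mono hU
  · rw [← image_univ, image_pow_image_eq_iterate_image C U h, image_univ]
  · rw [image_pow_image_eq_iterate_image C U h,
      image_range_eq_setOf_inner_eq_zero C U h horth hspan, iterate_succ, image_comp, ← LinearIsometry.coe_pow, LinearIsometry.image_setOf_inner_eq_zero]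

end Ladder

lemma ae_muT_iff {P : ℝ → Prop} :
    (∀ᵐ ω ∂muT, P ω) ↔ ∀ᵐ ω ∂volume.restrict (Ioc 0 (2 * π)), P ω := by
  simp only [muT, ae_iff, Measure.smul_apply, smul_eq_mul, mul_eq_zero,
    ENNReal.inv_eq_zero, ENNReal.ofReal_ne_top, false_or]

lemma muT_absolutelyContinuous : muT ≪ volume :=
  (Measure.absolutelyContinuous_of_le Measure.restrict_le_self).smul_left _

def periodize (g : ℝ → ℂ) (ω : ℝ) : ℂ := g (2 * π * Int.fract (ω / (2 * π)))

lemma measurable_periodize {g : ℝ → ℂ} (hg : Measurable g) : Measurable (periodize g) :=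
  hg.comp ((measurable_id.div_const _).fract.const_mul _)

lemma periodize_add_two_pi (g : ℝ → ℂ) (ω : ℝ) : periodize g (ω + 2 * π) = periodize g ω := by
  rw [periodize, periodize, add_div, div_self (by positivity), Int.fract_add_one]

lemma periodize_ae_eq (g : ℝ → ℂ) : periodize g =ᵐ[muT] g := by
  rw [EventuallyEq, ae_muT_iff, ae_restrict_iff' measurableSet_Ioc]
  filter_upwards [measure_singleton (μ := volume) (2 * π) |> measure_eq_zero_iff_ae_notMem.mp]
    with ω hω hmem
  have h2π : (0 : ℝ) < 2 * π := by positivity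
  have hfract : Int.fract (ω / (2 * π)) = ω / (2 * π) :=
    Int.fract_eq_self.mpr ⟨div_nonneg hmem.1.le h2π.le,
      (div_lt_one h2π).mpr (lt_of_le_of_ne hmem.2 hω)⟩
  rw [periodize, hfract, mul_div_cancel₀ _ h2π.ne']

lemma exists_periodic_ae_eq (f : L2T) :
    ∃ g : ℝ → ℂ, Measurable g ∧ (∀ ω, g (ω + 2 * π) = g ω) ∧ ⇑f =ᵐ[muT] g := by
  have hf := (Lp.memLp f).aestronglyMeasurable
  exact ⟨periodize hf.mk, measurable_periodize hf.stronglyMeasurable_mk.measurable,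
    periodize_add_two_pi _, hf.ae_eq_mk.trans (periodize_ae_eq _).symm⟩

lemma MeasureTheory.MemLp.toLp_eq_of_ae_eq {α E : Type*} [MeasurableSpace α] {μ : Measure α}
    [NormedAddCommGroup E] {p : ℝ≥0∞} {g : α → E} (hg : MemLp g p μ) {f : Lp E p μ}
    (hfg : ⇑f =ᵐ[μ] g) : hg.toLp g = f :=
  Lp.ext (hg.coeFn_toLp.trans hfg.symm)

lemma IsSOp.exists_ae_eq {m : ℝ → ℂ} {S : L2T →L[ℂ] L2T} (hS : IsSOp m S) (f : L2T) :
    ∃ g : ℝ → ℂ, Measurable g ∧ (∀ ω, g (ω + 2 * π) = g ω) ∧ ⇑f =ᵐ[muT] g ∧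
      ⇑(S f) =ᵐ[muT] fun ω => m ω * g (2 * ω) := by
  obtain ⟨g, hg, hper, hfg⟩ := exists_periodic_ae_eq f
  have hg2 : MemLp g 2 muT := (Lp.memLp f).ae_eq hfg
  refine ⟨g, hg, hper, hfg, ?_⟩
  simpa only [hg2.toLp_eq_of_ae_eq hfg] using hS g hg hper hg2

section Zak

variable {F : ℝ × ℝ → ℂ}

lemma lintegral_fiber_eq_one (hF : Measurable F)
    (hp₂ : ∀ᵐ ω ∂muT, (∫ x in Ioc (0 : ℝ) 1, ‖F (ω, x)‖ ^ 2) = 1) :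
    ∀ᵐ ω ∂muT, ∫⁻ x in Ioc (0 : ℝ) 1, ‖F (ω, x)‖ₑ ^ 2 = 1 := by
  filter_upwards [hp₂] with ω h
  have hFω : Measurable fun x => F (ω, x) := hF.comp measurable_prodMk_left
  rw [integral_eq_lintegral_of_nonneg_ae (.of_forall fun _ => by positivity)
    (hFω.norm.pow_const 2).aestronglyMeasurable, ENNReal.toReal_eq_one_iff] at h
  simpa only [← ofReal_norm, ← ENNReal.ofReal_pow (norm_nonneg _)] using h

lemma eLpNorm_mul_fiber (hF : Measurable F)
    (hfib : ∀ᵐ ω ∂muT, ∫⁻ x in Ioc (0 : ℝ) 1, ‖F (ω, x)‖ₑ ^ 2 = 1)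
    {α : ℝ → ℂ} (hα : Measurable α) :
    eLpNorm (fun p : ℝ × ℝ => α p.1 * F p) 2 muZ = eLpNorm α 2 muT := by
  simp only [eLpNorm_eq_lintegral_rpow_enorm_toReal two_ne_zero ENNReal.ofNat_ne_top,
    ENNReal.toReal_ofNat, ENNReal.rpow_two]
  congr 1
  rw [muZ, lintegral_prod _ (by fun_prop)]
  refine lintegral_congr_ae (hfib.mono fun ω h => ?_)
  simp only [enorm_mul, mul_pow]
  rw [lintegral_const_mul _ (by fun_prop), h, mul_one]

variable {CF : L2T →L[ℂ] HZ}
  (hCF : ∀ (α : ℝ → ℂ), Measurable α → ∀ hα : MemLp α 2 muT,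
    ⇑(CF (hα.toLp α)) =ᵐ[muZ] fun p : ℝ × ℝ => α p.1 * F p)
include hCF

lemma coeFn_CF_ae_eq {a : L2T} {g : ℝ → ℂ} (hg : Measurable g) (hag : ⇑a =ᵐ[muT] g) :
    ⇑(CF a) =ᵐ[muZ] fun p : ℝ × ℝ => g p.1 * F p := by
  have hg2 : MemLp g 2 muT := (Lp.memLp a).ae_eq hag
  simpa only [hg2.toLp_eq_of_ae_eq hag] using hCF g hg hg2

lemma norm_CF (hF : Measurable F)
    (hfib : ∀ᵐ ω ∂muT, ∫⁻ x in Ioc (0 : ℝ) 1, ‖F (ω, x)‖ₑ ^ 2 = 1) (a : L2T) :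
    ‖CF a‖ = ‖a‖ := by
  obtain ⟨g, hg, -, hag⟩ := exists_periodic_ae_eq a
  rw [Lp.norm_def, Lp.norm_def, eLpNorm_congr_ae (coeFn_CF_ae_eq hCF hg hag),
    eLpNorm_congr_ae hag, eLpNorm_mul_fiber hF hfib hg]

end Zak

lemma QP.comp_fst_mul {F : ℝ × ℝ → ℂ} (hF : QP F) {g : ℝ → ℂ}
    (hg : ∀ ω, g (ω + 2 * π) = g ω) : QP fun p : ℝ × ℝ => g p.1 * F p := by
  refine ⟨fun ω x => by simp only [hg, hF.1], fun ω x n => ?_⟩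
  simp only [hF.2]
  ring

lemma Ut_CF_eq_CF_S₀ {m₀ : ℝ → ℂ} (hm₀ : Measurable m₀)
    {F : ℝ × ℝ → ℂ} (hF : Measurable F) (hF_qp : QP F) (hF_mem : MemLp F 2 muZ)
    {Ut : HZ ≃ₗᵢ[ℂ] HZ} (hUt : IsUt Ut) {Tm : HZ →L[ℂ] HZ} (hTm : IsMulOp m₀ Tm)
    (hfix : Ut.symm (Tm (hF_mem.toLp F)) = hF_mem.toLp F)
    {S₀ : L2T →L[ℂ] L2T} (hS₀ : IsSOp m₀ S₀) {CF : L2T →L[ℂ] HZ}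
    (hCF : ∀ (α : ℝ → ℂ), Measurable α → ∀ hα : MemLp α 2 muT,
      ⇑(CF (hα.toLp α)) =ᵐ[muZ] fun p : ℝ × ℝ => α p.1 * F p)
    (a : L2T) : Ut (CF a) = CF (S₀ a) := by
  obtain ⟨g, hg, hper, hag, hS₀a⟩ := hS₀.exists_ae_eq a
  have hCFa := coeFn_CF_ae_eq hCF hg hag
  have hgF : MemLp (fun p : ℝ × ℝ => g p.1 * F p) 2 muZ := (Lp.memLp (CF a)).ae_eq hCFa
  have hUtCFa := hUt _ (by fun_prop) (hF_qp.comp_fst_mul hper) hgF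
  rw [hgF.toLp_eq_of_ae_eq hCFa] at hUtCFa
  have hUtF : ⇑(Ut (hF_mem.toLp F)) =ᵐ[muZ] fun p => m₀ p.1 * F p := by
    rw [← (LinearIsometryEquiv.symm_apply_eq Ut).mp hfix]
    filter_upwards [hTm (hF_mem.toLp F), hF_mem.coeFn_toLp] with p hT hF
    rw [hT, hF]
  have hCFS₀a := coeFn_CF_ae_eq hCF (by fun_prop) hS₀a
  refine Lp.ext ?_
  filter_upwards [hUtCFa, hUt F hF hF_qp hF_mem, hUtF, hCFS₀a] with p h₁ h₂ h₃ h₄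
  rw [h₁, h₄]
  -- `Ũ(gF)(ω, ·) = g(2ω) · (ŨF)(ω, ·)` and `ŨF = m₀F` by the fixed-point equation
  linear_combination g (2 * p.1) * (h₂.symm.trans h₃)

/-- The high-pass filter `m₁(z) = z · conj(m₀(-z))`, with `z = e^{-iω}` and `-z = e^{-i(ω + π)}`. -/
def highPass (m₀ : ℝ → ℂ) (ω : ℝ) : ℂ :=
  Complex.exp (-(Complex.I * ω)) * starRingEnd ℂ (m₀ (ω + π))

lemma exp_neg_I_mul_add_pi (ω : ℝ) :
    Complex.exp (-(Complex.I * ↑(ω + π))) = -Complex.exp (-(Complex.I * ω)) := by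
  rw [ofReal_add, show -(I * (ω + π)) = -(I * ω) - π * I by ring, Complex.exp_sub,
    Complex.exp_pi_mul_I, div_neg, div_one]

lemma exp_neg_I_mul_mul_conj (ω : ℝ) :
    Complex.exp (-(Complex.I * ω)) * starRingEnd ℂ (Complex.exp (-(Complex.I * ω))) = 1 := by
  rw [mul_conj, normSq_eq_norm_sq, show -(I * ω) = ((-ω : ℝ) : ℂ) * I by push_cast; ring,
    norm_exp_ofReal_mul_I, one_pow, ofReal_one]

lemma measurable_highPass {m₀ : ℝ → ℂ} (hm₀ : Measurable m₀) : Measurable (highPass m₀) := by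
  unfold highPass
  fun_prop

lemma norm_highPass (m₀ : ℝ → ℂ) (ω : ℝ) : ‖highPass m₀ ω‖ = ‖m₀ (ω + π)‖ := by
  rw [highPass, norm_mul, show -(I * ω) = ((-ω : ℝ) : ℂ) * I by push_cast; ring,
    norm_exp_ofReal_mul_I, RCLike.norm_conj, one_mul]

section Periodic

variable {m₀ : ℝ → ℂ} (hm_per : ∀ ω, m₀ (ω + 2 * π) = m₀ ω)
include hm_per

lemma highPass_add_pi (ω : ℝ) :
    highPass m₀ (ω + π) = -Complex.exp (-(Complex.I * ω)) * starRingEnd ℂ (m₀ ω) := by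
  rw [highPass, exp_neg_I_mul_add_pi, add_assoc, ← two_mul, hm_per]

lemma highPass_add_two_pi (ω : ℝ) : highPass m₀ (ω + 2 * π) = highPass m₀ ω := by
  rw [two_mul, ← add_assoc, highPass_add_pi hm_per, exp_neg_I_mul_add_pi, neg_neg, highPass]

end Periodic

theorem Function.Antiperiodic.intervalIntegral_eq_zero {E : Type*} [NormedAddCommGroup E]
    [NormedSpace ℝ E] {ψ : ℝ → E} {c : ℝ} (hψ : Antiperiodic ψ c) (a : ℝ) :
    ∫ x in a..a + 2 * c, ψ x = 0 := by
  have h : ∫ x in a..a + 2 * c, ψ x = -∫ x in a..a + 2 * c, ψ x :=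
    calc ∫ x in a..a + 2 * c, ψ x = ∫ x in a + c..a + c + 2 * c, ψ x := by
          simpa only [nsmul_eq_mul, Nat.cast_ofNat] using
            hψ.periodic.intervalIntegral_add_eq a (a + c)
      _ = ∫ x in a..a + 2 * c, ψ (x + c) := by
          rw [intervalIntegral.integral_comp_add_right, add_right_comm]
      _ = -∫ x in a..a + 2 * c, ψ x := by simp only [hψ _, intervalIntegral.integral_neg]
  have h2 : (2 : ℝ) • ∫ x in a..a + 2 * c, ψ x = 0 := by
    rw [two_smul]
    nth_rewrite 2 [h]
    exact add_neg_cancel _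
  exact (smul_eq_zero.mp h2).resolve_left two_ne_zero

/-- The integrand of `⟪S₀f, S₁g⟫` changes sign under `ω ↦ ω + π`. -/
lemma inner_S₀_S₁_eq_zero {m₀ : ℝ → ℂ} (hm_per : ∀ ω, m₀ (ω + 2 * π) = m₀ ω)
    {S₀ S₁ : L2T →L[ℂ] L2T} (hS₀ : IsSOp m₀ S₀) (hS₁ : IsSOp (highPass m₀) S₁) (f g : L2T) :
    ⟪S₀ f, S₁ g⟫_ℂ = 0 := by
  obtain ⟨f', -, hf'per, -, hS₀f⟩ := hS₀.exists_ae_eq f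
  obtain ⟨g', -, hg'per, -, hS₁g⟩ := hS₁.exists_ae_eq g
  set ψ : ℝ → ℂ := fun ω => starRingEnd ℂ (m₀ ω * f' (2 * ω)) * (highPass m₀ ω * g' (2 * ω))
  have hψ : Antiperiodic ψ π := fun ω => by
    simp only [ψ]
    rw [show 2 * (ω + π) = 2 * ω + 2 * π by ring, hf'per, hg'per, highPass_add_pi hm_per]
    simp only [highPass, map_mul]
    ring
  have hinner : (fun ω => ⟪S₀ f ω, S₁ g ω⟫_ℂ) =ᵐ[muT] ψ := by
    filter_upwards [hS₀f, hS₁g] with ω h₀ h₁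
    rw [RCLike.inner_apply, h₀, h₁]
    exact mul_comm _ _
  rw [L2.inner_def, integral_congr_ae hinner, muT, integral_smul_measure,
    ← intervalIntegral.integral_of_le (by positivity), ← zero_add (2 * π),
    hψ.intervalIntegral_eq_zero, smul_zero]

lemma setLIntegral_comp_half_add (φ : ℝ → ℝ≥0∞) (hφ : Measurable φ) (c : ℝ) :
    ∫⁻ u in Ioc 0 (2 * π), φ (u / 2 + c) = 2 * ∫⁻ x in Ioc c (π + c), φ x := by
  have hmap : Measure.map (fun u : ℝ => u / 2 + c) volume = (2 : ℝ≥0∞) • volume := by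
    rw [show (fun u : ℝ => u / 2 + c) = (· + c) ∘ (· * 2⁻¹) by ext; simp [div_eq_mul_inv],
      ← Measure.map_map (by fun_prop) (by fun_prop), Real.map_volume_mul_right (by norm_num),
      Measure.map_smul, map_add_right_eq_self, inv_inv, abs_two, ENNReal.ofReal_ofNat]
  have hpre : (fun u : ℝ => u / 2 + c) ⁻¹' Ioc c (π + c) = Ioc 0 (2 * π) := by
    ext u
    simp only [mem_preimage, mem_Ioc]
    constructor <;> rintro ⟨h₁, h₂⟩ <;> constructor <;> linarith
  rw [← hpre, ← setLIntegral_map measurableSet_Ioc hφ (by fun_prop), hmap, Measure.restrict_smul,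
    lintegral_smul_measure, smul_eq_mul]

lemma memLp_comp_half_add {f : ℝ → ℂ} (hf : Measurable f) (hf₂ : MemLp f 2 muT) {c : ℝ}
    (hc₀ : 0 ≤ c) (hcπ : c ≤ π) : MemLp (fun u => f (u / 2 + c)) 2 muT := by
  refine ⟨(hf.comp (by fun_prop)).aestronglyMeasurable, ?_⟩
  have hf₂' := hf₂.2
  rw [eLpNorm_lt_top_iff_lintegral_rpow_enorm_lt_top two_ne_zero ENNReal.ofNat_ne_top,
    ENNReal.toReal_ofNat] at hf₂' ⊢
  calc ∫⁻ u, ‖f (u / 2 + c)‖ₑ ^ (2 : ℝ) ∂muT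
      = (ENNReal.ofReal (2 * π))⁻¹ * (2 * ∫⁻ x in Ioc c (π + c), ‖f x‖ₑ ^ (2 : ℝ)) := by
        rw [muT, lintegral_smul_measure, smul_eq_mul,
          setLIntegral_comp_half_add (fun x => ‖f x‖ₑ ^ (2 : ℝ)) (by fun_prop)]
    _ ≤ (ENNReal.ofReal (2 * π))⁻¹ * (2 * ∫⁻ x in Ioc 0 (2 * π), ‖f x‖ₑ ^ (2 : ℝ)) := by
        gcongr
        linarith
    _ = 2 * ∫⁻ x, ‖f x‖ₑ ^ (2 : ℝ) ∂muT := by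
        rw [muT, lintegral_smul_measure, smul_eq_mul, mul_left_comm]
    _ < ⊤ := ENNReal.mul_lt_top (by simp) hf₂'

/-- `(S*f)(z) = ½ ∑_{w² = z} conj(m(w)) f(w)`, the adjoint of `f ↦ m · (f ∘ sq)`. -/
def adjointSOp (m f : ℝ → ℂ) (u : ℝ) : ℂ :=
  (1 / 2) * (starRingEnd ℂ (m (u / 2)) * f (u / 2) +
    starRingEnd ℂ (m (u / 2 + π)) * f (u / 2 + π))

section AdjointSOp

variable {m f : ℝ → ℂ}

lemma measurable_adjointSOp (hm : Measurable m) (hf : Measurable f) :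
    Measurable (adjointSOp m f) := by
  unfold adjointSOp
  fun_prop

lemma adjointSOp_add_two_pi (hm : ∀ ω, m (ω + 2 * π) = m ω) (hf : ∀ ω, f (ω + 2 * π) = f ω)
    (u : ℝ) : adjointSOp m f (u + 2 * π) = adjointSOp m f u := by
  rw [adjointSOp, adjointSOp, add_div, mul_div_cancel_left₀ _ two_ne_zero, add_assoc, ← two_mul,
    hm, hf]
  ring

lemma memLp_adjointSOp (hm : Measurable m) {C : ℝ} (hmC : ∀ ω, ‖m ω‖ ≤ C) (hf : Measurable f)
    (hf₂ : MemLp f 2 muT) : MemLp (adjointSOp m f) 2 muT := by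
  have hterm : ∀ c, 0 ≤ c → c ≤ π →
      MemLp (fun u => starRingEnd ℂ (m (u / 2 + c)) * f (u / 2 + c)) 2 muT := by
    intro c hc₀ hcπ
    refine (memLp_comp_half_add hf hf₂ hc₀ hcπ).of_le_mul (c := C)
      (Measurable.aestronglyMeasurable (by fun_prop)) (.of_forall fun u => ?_)
    rw [norm_mul, RCLike.norm_conj]
    exact mul_le_mul_of_nonneg_right (hmC _) (norm_nonneg _)
  unfold adjointSOp
  simpa only [add_zero, Pi.add_apply] using
    ((hterm 0 le_rfl pi_pos.le).add (hterm π pi_pos.le le_rfl)).const_mul (1 / 2 : ℂ)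

end AdjointSOp

/-- `f = S₀(S₀*f) + S₁(S₁*f)`; pointwise this is `M M* = 2` for
`M = (m₀(z), m₁(z); m₀(-z), m₁(-z))`. -/
lemma exists_eq_S₀_add_S₁ {m₀ : ℝ → ℂ} (hm₀ : Measurable m₀) (hm_bdd : ∃ C, ∀ ω, ‖m₀ ω‖ ≤ C)
    (hm_per : ∀ ω, m₀ (ω + 2 * π) = m₀ ω)
    (hm_quad : ∀ᵐ ω ∂(volume : Measure ℝ), ‖m₀ ω‖ ^ 2 + ‖m₀ (ω + π)‖ ^ 2 = 2)
    {S₀ S₁ : L2T →L[ℂ] L2T} (hS₀ : IsSOp m₀ S₀) (hS₁ : IsSOp (highPass m₀) S₁) (f : L2T) :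
    ∃ g k, f = S₀ g + S₁ k := by
  obtain ⟨C, hC⟩ := hm_bdd
  obtain ⟨f', hf', hf'per, hff'⟩ := exists_periodic_ae_eq f
  have hf'₂ : MemLp f' 2 muT := (Lp.memLp f).ae_eq hff'
  have hm₁ := measurable_highPass hm₀
  have hG₀ := memLp_adjointSOp hm₀ hC hf' hf'₂
  have hG₁ := memLp_adjointSOp hm₁ (fun ω => (norm_highPass m₀ ω).trans_le (hC _)) hf' hf'₂
  refine ⟨hG₀.toLp _, hG₁.toLp _, Lp.ext ?_⟩
  filter_upwards [hff', muT_absolutelyContinuous.ae_le hm_quad, Lp.coeFn_add (S₀ _) (S₁ _),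
    hS₀ _ (measurable_adjointSOp hm₀ hf') (adjointSOp_add_two_pi hm_per hf'per) hG₀,
    hS₁ _ (measurable_adjointSOp hm₁ hf') (adjointSOp_add_two_pi (highPass_add_two_pi hm_per)
      hf'per) hG₁] with ω hf hq hadd h₀ h₁
  have hdiag : m₀ ω * starRingEnd ℂ (m₀ ω) + highPass m₀ ω * starRingEnd ℂ (highPass m₀ ω) = 2 := by
    rw [mul_conj, mul_conj, normSq_eq_norm_sq, normSq_eq_norm_sq, norm_highPass]
    exact_mod_cast hq
  have hoff : m₀ ω * starRingEnd ℂ (m₀ (ω + π)) +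
      highPass m₀ ω * starRingEnd ℂ (highPass m₀ (ω + π)) = 0 := by
    rw [highPass_add_pi hm_per]
    simp only [highPass, map_mul, map_neg, conj_conj]
    linear_combination (-(m₀ ω * starRingEnd ℂ (m₀ (ω + π)))) * exp_neg_I_mul_mul_conj ω
  rw [hf, hadd, Pi.add_apply, h₀, h₁]
  simp only [adjointSOp, mul_div_cancel_left₀ ω two_ne_zero]
  linear_combination (-(1 / 2) * f' ω) * hdiag + (-(1 / 2) * f' (ω + π)) * hoff

/-- Theorem 4.7, second part: let `F ∈ H_Z` satisfy `M̃(F) = F` and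
`p₂(F) ≡ 1` a.e.  With `m₁(z) = z·conj(m₀(-z))`, `S₁f = m₁·(f∘sq)`, `L₀ = S₁(L²(𝕋))`,
`V₀(F) = closure {π_Z(α)F : α ∈ L²(𝕋)}`, `Vₙ(F) = Ũⁿ(V₀(F))`, and
`Wₙ(F) = Vₙ(F) ⊖ V_{n+1}(F)`: then `V_{n+1}(F) ⊆ Vₙ(F)`, `C_F(S₀ⁿL²(𝕋)) = Vₙ(F)`,
`C_F(S₀ⁿL₀) = Wₙ(F)` for all `n ≥ 0`, and `C_F` is isometric. -/
theorem multiresolution_ladder_of_scaling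
    (m₀ : ℝ → ℂ)
    (hm_meas : Measurable m₀) (hm_bdd : ∃ C, ∀ ω, ‖m₀ ω‖ ≤ C)
    (hm_per : ∀ ω, m₀ (ω + 2 * π) = m₀ ω)
    (hm_quad : ∀ᵐ ω ∂(volume : Measure ℝ), ‖m₀ ω‖ ^ 2 + ‖m₀ (ω + π)‖ ^ 2 = 2)
    (F : ℝ × ℝ → ℂ) (hF_meas : Measurable F) (hF_qp : QP F)
    (hF_mem : MeasureTheory.MemLp F 2 muZ)
    (Ut : HZ ≃ₗᵢ[ℂ] HZ) (hUt : IsUt Ut)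
    (Tm : HZ →L[ℂ] HZ) (hTm : IsMulOp m₀ Tm)
    (hfix : Ut.symm (Tm (hF_mem.toLp F)) = hF_mem.toLp F)
    (hF_p2_one : ∀ᵐ ω ∂muT, (∫ x in Set.Ioc (0 : ℝ) 1, ‖F (ω, x)‖ ^ 2) = 1)
    (S₀ : L2T →L[ℂ] L2T) (hS₀ : IsSOp m₀ S₀)
    (S₁ : L2T →L[ℂ] L2T)
    (hS₁ : IsSOp (fun ω => Complex.exp (-(Complex.I * (ω : ℂ))) *
      (starRingEnd ℂ) (m₀ (ω + π))) S₁)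
    (CF : L2T →L[ℂ] HZ)
    (hCF : ∀ (α : ℝ → ℂ), Measurable α → ∀ hα : MeasureTheory.MemLp α 2 muT,
      ⇑(CF (hα.toLp α)) =ᵐ[muZ] fun p : ℝ × ℝ => α p.1 * F p) :
    (∀ n : ℕ,
      (⇑Ut)^[n + 1] '' closure (Set.range ⇑CF) ⊆ (⇑Ut)^[n] '' closure (Set.range ⇑CF)) ∧
    (∀ n : ℕ,
      ⇑CF '' Set.range ⇑(S₀ ^ n) = (⇑Ut)^[n] '' closure (Set.range ⇑CF)) ∧
    (∀ n : ℕ,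
      ⇑CF '' (⇑(S₀ ^ n) '' Set.range ⇑S₁) =
        {v ∈ (⇑Ut)^[n] '' closure (Set.range ⇑CF) |
          ∀ w ∈ (⇑Ut)^[n + 1] '' closure (Set.range ⇑CF), (inner ℂ w v : ℂ) = 0}) ∧
    ∀ α : L2T, ‖CF α‖ = ‖α‖ := by
  have hCF_isom := norm_CF hCF hF_meas (lintegral_fiber_eq_one hF_meas hF_p2_one)
  let C : L2T →ₗᵢ[ℂ] HZ := ⟨CF.toLinearMap, hCF_isom⟩
  have hC : Semiconj C S₀ Ut.toLinearIsometry := fun a =>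
    (Ut_CF_eq_CF_S₀ hm_meas hF_meas hF_qp hF_mem hUt hTm hfix hS₀ hCF a).symm
  obtain ⟨hV_anti, hV_eq, hW_eq⟩ := multiresolution_ladder C Ut.toLinearIsometry hC
    (inner_S₀_S₁_eq_zero hm_per hS₀ hS₁) (exists_eq_S₀_add_S₁ hm_meas hm_bdd hm_per hm_quad hS₀ hS₁)
  exact ⟨hV_anti, hV_eq, hW_eq, hCF_isom⟩
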